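/- Let β, β̂ ∈ ℝᵖ be nonzero vectors, let K ⊆ {k : β_k ≠ 0} be a nonempty set of indices such that β̂_k = 0 for every k ∈ K, and set ξ = min { β_k² / ‖β‖₂² : β_k ≠ 0 }. Then ‖P(β̂) − P(β)‖_F² ≥ 2 |K| ξ − |K|² ξ². -/

import Mathlib

open Matrix BigOperators Finset

/-- ℓ¹ norm of a vector in ℝᵖ. -/
noncomputable def l1 {p : ℕ} (v : Fin p → ℝ) : ℝ := ∑ k, |v k|

/-- ℓ² norm of a vector in ℝᵖ. -/
noncomputable def l2 {p : ℕ} (v : Fin p → ℝ) : ℝ := Real.sqrt (∑ k, (v k) ^ 2)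

/-- ℓ^∞ norm of a vector in ℝᵖ (the sup norm on `Fin p → ℝ`). -/
noncomputable def linf {p : ℕ} (v : Fin p → ℝ) : ℝ := ‖v‖

/-- The restriction `v_S` of a vector to an index set `S` (zero outside `S`). -/
def vres {p : ℕ} (S : Finset (Fin p)) (v : Fin p → ℝ) : Fin p → ℝ :=
  fun k => if k ∈ S then v k else 0

/-- The CHOMP objective `F(β) = (1/2)‖Lᵀβ − κ‖₂² + μ‖β‖₁`. -/
noncomputable def chompF {p : ℕ} (L : Matrix (Fin p) (Fin p) ℝ) (κ : Fin p → ℝ) (μ : ℝ)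
    (β : Fin p → ℝ) : ℝ :=
  (1 / 2) * (l2 (Lᵀ.mulVec β - κ)) ^ 2 + μ * l1 β

/-- The projection matrix `P(v) = v (vᵀv)⁻¹ vᵀ` associated with a vector `v`
(by the junk-value convention `0⁻¹ = 0` in `ℝ`, this gives `P(0) = 0`). -/
noncomputable def proj {p : ℕ} (v : Fin p → ℝ) : Matrix (Fin p) (Fin p) ℝ :=
  (v ⬝ᵥ v)⁻¹ • Matrix.vecMulVec v v

/-- The Frobenius norm of a matrix. -/
noncomputable def frob {p : ℕ} (A : Matrix (Fin p) (Fin p) ℝ) : ℝ :=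
  Real.sqrt (∑ i, ∑ j, (A i j) ^ 2)

/-! For nonzero `u`, `v` one has `‖P(u) − P(v)‖_F² = 2 − 2 cos² ∠(u, v)`. If `u` vanishes on `K`,
Cauchy–Schwarz over the complement of `K` gives `cos² ∠(u, v) ≤ 1 − ∑_{k ∈ K} v_k² / ‖v‖²`, and
each of these `|K|` summands is at least `ξ`. -/

lemma dotProduct_self_pos {ι : Type*} [Fintype ι] {v : ι → ℝ} (hv : v ≠ 0) : 0 < v ⬝ᵥ v := by
  simpa using dotProduct_self_star_pos_iff.mpr hv

lemma l2_sq {p : ℕ} (v : Fin p → ℝ) : l2 v ^ 2 = v ⬝ᵥ v := by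
  rw [l2, Real.sq_sqrt (by positivity)]
  simp only [dotProduct, sq]

lemma frob_sq {p : ℕ} (A : Matrix (Fin p) (Fin p) ℝ) : frob A ^ 2 = ∑ i, ∑ j, A i j ^ 2 :=
  Real.sq_sqrt (by positivity)

lemma sum_sum_vecMulVec_mul_vecMulVec {ι R : Type*} [Fintype ι] [CommSemiring R]
    (u v w x : ι → R) :
    ∑ i, ∑ j, vecMulVec u v i j * vecMulVec w x i j = (u ⬝ᵥ w) * (v ⬝ᵥ x) := by
  simp only [vecMulVec_apply, dotProduct, sum_mul_sum]
  exact sum_congr rfl fun i _ => sum_congr rfl fun j _ => by ring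

theorem frob_proj_sub_proj_sq {p : ℕ} {u v : Fin p → ℝ} (hu : u ≠ 0) (hv : v ≠ 0) :
    frob (proj u - proj v) ^ 2 = 2 - 2 * ((u ⬝ᵥ v) ^ 2 / ((u ⬝ᵥ u) * (v ⬝ᵥ v))) := by
  have hu' := (dotProduct_self_pos hu).ne'
  have hv' := (dotProduct_self_pos hv).ne'
  have hexpand : ∀ i j, (proj u - proj v) i j ^ 2 =
      (u ⬝ᵥ u)⁻¹ ^ 2 * (vecMulVec u u i j * vecMulVec u u i j)
      - 2 * ((u ⬝ᵥ u)⁻¹ * (v ⬝ᵥ v)⁻¹) * (vecMulVec u u i j * vecMulVec v v i j)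
      + (v ⬝ᵥ v)⁻¹ ^ 2 * (vecMulVec v v i j * vecMulVec v v i j) := fun i j => by
    simp only [proj, Matrix.sub_apply, Matrix.smul_apply, smul_eq_mul]
    ring
  simp only [frob_sq, hexpand, sum_add_distrib, sum_sub_distrib, ← mul_sum,
    sum_sum_vecMulVec_mul_vecMulVec]
  field_simp
  ring

theorem dotProduct_sq_le_of_forall_mem_eq_zero {ι : Type*} [Fintype ι] [DecidableEq ι]
    {u : ι → ℝ} (v : ι → ℝ) {K : Finset ι} (hu : ∀ k ∈ K, u k = 0) :
    (u ⬝ᵥ v) ^ 2 ≤ (u ⬝ᵥ u) * (v ⬝ᵥ v - ∑ k ∈ K, v k ^ 2) := by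
  have hsupp : ∀ w : ι → ℝ, u ⬝ᵥ w = ∑ k ∈ Kᶜ, u k * w k := fun w => by
    rw [dotProduct, ← sum_add_sum_compl K, sum_eq_zero fun k hk => by rw [hu k hk, zero_mul],
      zero_add]
  have hv : v ⬝ᵥ v - ∑ k ∈ K, v k ^ 2 = ∑ k ∈ Kᶜ, v k ^ 2 := by
    rw [sub_eq_iff_eq_add, dotProduct, ← sum_compl_add_sum K]
    simp only [sq]
  rw [hsupp v, hsupp u, hv]
  simpa only [sq] using sum_mul_sq_le_sq_mul_sq Kᶜ u v

theorem two_mul_sum_sq_div_le_frob_proj_sub_proj_sq {p : ℕ} {u v : Fin p → ℝ}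
    (hu : u ≠ 0) (hv : v ≠ 0) {K : Finset (Fin p)} (huK : ∀ k ∈ K, u k = 0) :
    2 * ∑ k ∈ K, v k ^ 2 / (v ⬝ᵥ v) ≤ frob (proj u - proj v) ^ 2 := by
  have hb := dotProduct_self_pos hv
  have hcs := dotProduct_sq_le_of_forall_mem_eq_zero v huK
  have hcos : (u ⬝ᵥ v) ^ 2 / ((u ⬝ᵥ u) * (v ⬝ᵥ v)) ≤ 1 - ∑ k ∈ K, v k ^ 2 / (v ⬝ᵥ v) := by
    rw [← sum_div, one_sub_div hb.ne', div_le_div_iff₀ (mul_pos (dotProduct_self_pos hu) hb) hb]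
    nlinarith
  rw [frob_proj_sub_proj_sq hu hv]
  linarith

theorem projection_underfit_xi_bound_general {p : ℕ}
    (β βh : Fin p → ℝ) (hβ : β ≠ 0) (hβh : βh ≠ 0)
    (K : Finset (Fin p))
    (hKsub : ∀ k ∈ K, β k ≠ 0) (hK0 : ∀ k ∈ K, βh k = 0)
    (ξ : ℝ)
    (hξ_le : ∀ k, β k ≠ 0 → ξ ≤ (β k) ^ 2 / (l2 β) ^ 2) :
    2 * (K.card : ℝ) * ξ - (K.card : ℝ) ^ 2 * ξ ^ 2 ≤
      (frob (proj βh - proj β)) ^ 2 := by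
  have hcard : (K.card : ℝ) * ξ ≤ ∑ k ∈ K, β k ^ 2 / (β ⬝ᵥ β) := by
    simpa only [nsmul_eq_mul, l2_sq] using
      card_nsmul_le_sum K _ ξ fun k hk => hξ_le k (hKsub k hk)
  calc 2 * (K.card : ℝ) * ξ - (K.card : ℝ) ^ 2 * ξ ^ 2
      ≤ 2 * ((K.card : ℝ) * ξ) := by nlinarith [sq_nonneg ((K.card : ℝ) * ξ)]
    _ ≤ 2 * ∑ k ∈ K, β k ^ 2 / (β ⬝ᵥ β) := by gcongr
    _ ≤ _ := two_mul_sum_sq_div_le_frob_proj_sub_proj_sq hβh hβ hK0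

/-- the key underfitting bound for the projection information
criterion: if `βh` vanishes on a nonempty set `K` of indices of nonzero
components of `β`, and `ξ = min { β_k²/‖β‖₂² : β_k ≠ 0 }`, then
`‖P(βh) − P(β)‖_F² ≥ 2|K|ξ − |K|²ξ²`. -/
theorem projection_underfit_xi_bound {p : ℕ}
    (β βh : Fin p → ℝ) (hβ : β ≠ 0) (hβh : βh ≠ 0)
    (K : Finset (Fin p)) (hKne : K.Nonempty)
    (hKsub : ∀ k ∈ K, β k ≠ 0) (hK0 : ∀ k ∈ K, βh k = 0)
    (ξ : ℝ)
    (hξ_le : ∀ k, β k ≠ 0 → ξ ≤ (β k) ^ 2 / (l2 β) ^ 2)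
    (hξ_mem : ∃ k, β k ≠ 0 ∧ ξ = (β k) ^ 2 / (l2 β) ^ 2) :
    2 * (K.card : ℝ) * ξ - (K.card : ℝ) ^ 2 * ξ ^ 2 ≤
      (frob (proj βh - proj β)) ^ 2 :=
  projection_underfit_xi_bound_general β βh hβ hβh K hKsub hK0 ξ hξ_le
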